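/- arXiv:0705.1655 — 3 statements merged into one kernel-verified Lean document; each statement's English description precedes it below -/
import Mathlib

section
/- Let μ ∈ L^∞(Δ) with ‖μ‖_∞ = k > 0, and suppose there is a sequence φₙ ∈ A(Δ) such that k‖φₙ‖ − Re ∫∫_Δ μφₙ → 0 and |φₙ(z)| → ∞ for almost every z in a set E ⊂ Δ of full measure in Δ \ A (for some compact A). Then the normalized sequence φₙ/‖φₙ‖ is a Hamilton sequence for μ: ∫∫_Δ μ (φₙ/‖φₙ‖) → k. Consequently μ is infinitesimally extremal, i.e., ‖ν‖_∞ ≥ k for every ν ∈ L^∞(Δ) with ∫∫_Δ νφ = ∫∫_Δ μφ for all φ ∈ A(Δ). -/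
/-!
Blow-up of `|φₙ|` on `Δ \ A`, a nonempty open set, forces `‖φₙ‖ → ∞` by Fatou's lemma, so
dividing `k‖φₙ‖ - Re ∫∫ μφₙ → 0` by `‖φₙ‖` gives `Re ∫∫ μφₙ/‖φₙ‖ → k`. These integrals have
modulus at most `k`, and a point of the disk of radius `k` whose real part is close to `k` is
close to `k`; hence `∫∫ μφₙ/‖φₙ‖ → k`. For `ν` infinitesimally equivalent to `μ` the same
integrals have modulus at most any essential bound `c` of `ν`, so `k ≤ c`.
-/

open Set MeasureTheory Metric Filter Topology
open scoped ENNReal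

section

variable {α : Type*} [MeasurableSpace α] {ν : Measure α}

theorem norm_integral_mul_le_of_ae_norm_le {R : Type*} [NormedRing R] [NormedSpace ℝ R]
    {g f : α → R} {c : ℝ} (hgc : ∀ᵐ x ∂ν, ‖g x‖ ≤ c) (hf : Integrable f ν) :
    ‖∫ x, g x * f x ∂ν‖ ≤ c * ∫ x, ‖f x‖ ∂ν := by
  rw [← integral_const_mul]
  refine norm_integral_le_of_norm_le (hf.norm.const_mul c) ?_
  filter_upwards [hgc] with x hx
  exact (norm_mul_le _ _).trans (mul_le_mul_of_nonneg_right hx (norm_nonneg _))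

theorem tendsto_lintegral_top_of_ae_tendsto_top (hν : ν ≠ 0) {f : ℕ → α → ℝ≥0∞}
    (hf : ∀ n, AEMeasurable (f n) ν) (h : ∀ᵐ x ∂ν, Tendsto (fun n => f n x) atTop (𝓝 ⊤)) :
    Tendsto (fun n => ∫⁻ x, f n x ∂ν) atTop (𝓝 ⊤) := by
  have hliminf : liminf (fun n => ∫⁻ x, f n x ∂ν) atTop = ⊤ := by
    refine top_le_iff.1 (le_trans ?_ (lintegral_liminf_le' hf))
    rw [lintegral_congr_ae (h.mono fun x hx => hx.liminf_eq), lintegral_const,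
      ENNReal.top_mul (Measure.measure_univ_ne_zero.2 hν)]
  exact ENNReal.tendsto_nhds_top_iff_nat.2 fun m =>
    eventually_lt_of_lt_liminf (hliminf ▸ ENNReal.natCast_lt_top m)

theorem tendsto_integral_norm_atTop_of_ae_tendsto_norm_atTop {E : Type*} [NormedAddCommGroup E]
    (hν : ν ≠ 0) {f : ℕ → α → E} (hf : ∀ n, Integrable (f n) ν)
    (h : ∀ᵐ x ∂ν, Tendsto (fun n => ‖f n x‖) atTop atTop) :
    Tendsto (fun n => ∫ x, ‖f n x‖ ∂ν) atTop atTop := by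
  have hlin : Tendsto (fun n => ∫⁻ x, ‖f n x‖ₑ ∂ν) atTop (𝓝 ⊤) :=
    tendsto_lintegral_top_of_ae_tendsto_top hν (fun n => (hf n).aestronglyMeasurable.enorm)
      (h.mono fun x hx => by
        simpa only [Function.comp_def, ofReal_norm] using ENNReal.tendsto_ofReal_atTop.comp hx)
  refine ENNReal.tendsto_ofReal_nhds_top.1 ?_
  simpa only [ofReal_integral_norm_eq_lintegral_enorm (hf _)] using hlin

theorem tendsto_setIntegral_norm_atTop_of_subset {E : Type*} [NormedAddCommGroup E]
    {s t : Set α} (hts : t ⊆ s) (ht : ν t ≠ 0) {f : ℕ → α → E}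
    (hf : ∀ n, IntegrableOn (f n) s ν)
    (h : ∀ᵐ x ∂ν.restrict t, Tendsto (fun n => ‖f n x‖) atTop atTop) :
    Tendsto (fun n => ∫ x in s, ‖f n x‖ ∂ν) atTop atTop :=
  tendsto_atTop_mono
    (fun n => setIntegral_mono_set (hf n).norm (ae_of_all _ fun _ => norm_nonneg _)
      hts.eventuallyLE)
    (tendsto_integral_norm_atTop_of_ae_tendsto_norm_atTop (Measure.restrict_eq_zero.not.2 ht)
      (fun n => (hf n).mono_set hts) h)

theorem norm_integral_mul_div_integral_norm_le {g f : α → ℂ} {c : ℝ}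
    (hgc : ∀ᵐ x ∂ν, ‖g x‖ ≤ c) (hf : Integrable f ν) (hpos : 0 < ∫ x, ‖f x‖ ∂ν) :
    ‖(∫ x, g x * f x ∂ν) / ((∫ x, ‖f x‖ ∂ν : ℝ) : ℂ)‖ ≤ c := by
  rw [norm_div, Complex.norm_real, Real.norm_of_nonneg hpos.le, div_le_iff₀ hpos]
  exact norm_integral_mul_le_of_ae_norm_le hgc hf

end

theorem ball_diff_nonempty_of_isClosed {E : Type*} [NormedAddCommGroup E] [NormedSpace ℝ E]
    [Nontrivial E] {x : E} {r : ℝ} (hr : 0 < r) {A : Set E} (hA : IsClosed A)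
    (hAB : A ⊆ ball x r) : (ball x r \ A).Nonempty := by
  by_contra hempty
  rw [not_nonempty_iff_eq_empty, sdiff_eq_empty] at hempty
  have hclosed : closedBall x r ⊆ ball x r := by
    rw [← closure_ball x hr.ne']
    exact (hA.closure_subset_iff.2 hempty).trans hAB
  obtain ⟨y, hy⟩ := (NormedSpace.sphere_nonempty (x := x)).2 hr.le
  exact (mem_sphere.1 hy).not_lt (mem_ball.1 (hclosed (sphere_subset_closedBall hy)))

theorem Complex.tendsto_of_norm_le_of_tendsto_re {ι : Type*} {l : Filter ι} {z : ι → ℂ} {k : ℝ}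
    (hnorm : ∀ᶠ i in l, ‖z i‖ ≤ k) (hre : Tendsto (fun i => (z i).re) l (𝓝 k)) :
    Tendsto z l (𝓝 (k : ℂ)) := by
  -- `‖z - k‖² = ‖z‖² - 2k Re z + k² ≤ 2k (k - Re z)`
  have hsq : Tendsto (fun i => ‖z i - k‖ ^ 2) l (𝓝 0) := by
    have hlim : Tendsto (fun i => 2 * k * (k - (z i).re)) l (𝓝 0) := by
      simpa using ((tendsto_const_nhds (x := k)).sub hre).const_mul (2 * k)
    refine squeeze_zero' (Eventually.of_forall fun i => sq_nonneg _) ?_ hlim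
    filter_upwards [hnorm] with i hi
    have hsq_le : ‖z i‖ ^ 2 ≤ k ^ 2 := pow_le_pow_left₀ (norm_nonneg _) hi 2
    rw [Complex.sq_norm, Complex.normSq_apply] at hsq_le ⊢
    simp only [Complex.sub_re, Complex.sub_im, Complex.ofReal_re, Complex.ofReal_im]
    nlinarith
  rw [tendsto_iff_norm_sub_tendsto_zero]
  simpa [Real.sqrt_sq (norm_nonneg _)] using hsq.sqrt

theorem hamilton_sequence_and_extremality_general
    (μ : ℂ → ℂ) (k : ℝ)
    -- `‖μ‖_∞ = k`: a.e. bounded by `k` on `Δ` ...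
    (hμk : ∀ᵐ z ∂(volume.restrict (ball (0 : ℂ) 1)), ‖μ z‖ ≤ k)
    (A : Set ℂ) (hA : IsCompact A) (hAΔ : A ⊆ ball (0 : ℂ) 1)
    (φ : ℕ → ℂ → ℂ)
    (hφholo : ∀ n, DifferentiableOn ℂ (φ n) (ball (0 : ℂ) 1))
    (hφint : ∀ n, IntegrableOn (φ n) (ball (0 : ℂ) 1))
    -- `k‖φₙ‖ - Re ∫∫_Δ μ φₙ → 0`:
    (hdelta : Tendsto (fun n =>
        k * (∫ z in ball (0 : ℂ) 1, ‖φ n z‖) -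
          (∫ z in ball (0 : ℂ) 1, μ z * φ n z).re) atTop (nhds 0))
    -- `|φₙ(z)| → ∞` for a.e. `z ∈ Δ \ A`:
    (hblow : ∀ᵐ z ∂(volume.restrict (ball (0 : ℂ) 1 \ A)),
        Tendsto (fun n => ‖φ n z‖) atTop atTop) :
    -- `φₙ/‖φₙ‖` is a Hamilton sequence for `μ`:
    Tendsto (fun n => ∫ z in ball (0 : ℂ) 1,
        μ z * (φ n z / ((∫ w in ball (0 : ℂ) 1, ‖φ n w‖ : ℝ) : ℂ)))
      atTop (nhds (k : ℂ)) ∧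
    -- `μ` is infinitesimally extremal: every `ν` infinitesimally equivalent to `μ`
    -- has essential sup norm at least `k`:
    (∀ ν : ℂ → ℂ, Measurable ν →
      (∀ φ' : ℂ → ℂ, DifferentiableOn ℂ φ' (ball (0 : ℂ) 1) →
        IntegrableOn φ' (ball (0 : ℂ) 1) →
        ∫ z in ball (0 : ℂ) 1, ν z * φ' z = ∫ z in ball (0 : ℂ) 1, μ z * φ' z) →
      ∀ c : ℝ, (∀ᵐ z ∂(volume.restrict (ball (0 : ℂ) 1)), ‖ν z‖ ≤ c) → k ≤ c) := by
  set N : ℕ → ℝ := fun n => ∫ z in ball (0 : ℂ) 1, ‖φ n z‖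
  have hN : Tendsto N atTop atTop :=
    tendsto_setIntegral_norm_atTop_of_subset sdiff_subset
      ((isOpen_ball.sdiff hA.isClosed).measure_ne_zero volume
        (ball_diff_nonempty_of_isClosed one_pos hA.isClosed hAΔ)) hφint hblow
  have hNpos : ∀ᶠ n in atTop, 0 < N n := hN.eventually_gt_atTop 0
  set I : ℕ → ℂ := fun n => (∫ z in ball (0 : ℂ) 1, μ z * φ n z) / (N n : ℂ)
  have hI : ∀ n, ∫ z in ball (0 : ℂ) 1, μ z * (φ n z / (N n : ℂ)) = I n := fun n => by
    simp only [I, ← mul_div_assoc, integral_div]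
  have hre : Tendsto (fun n => (I n).re) atTop (𝓝 k) := by
    have hgap : Tendsto (fun n => k - (I n).re) atTop (𝓝 0) := by
      refine (mul_zero (0 : ℝ) ▸ hdelta.mul (tendsto_inv_atTop_zero.comp hN)).congr' ?_
      filter_upwards [hNpos] with n hn
      rw [Function.comp_apply, ← div_eq_mul_inv, sub_div, mul_div_cancel_right₀ k hn.ne',
        Complex.div_ofReal_re]
    simpa using (tendsto_const_nhds (x := k)).sub hgap
  have hIk : Tendsto I atTop (𝓝 k) := Complex.tendsto_of_norm_le_of_tendsto_re
    (hNpos.mono fun n hn => norm_integral_mul_div_integral_norm_le hμk (hφint n) hn) hre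
  refine ⟨hIk.congr fun n => (hI n).symm, fun ν _ hνμ c hνc => ?_⟩
  have hIc : ∀ᶠ n in atTop, ‖I n‖ ≤ c := hNpos.mono fun n hn => by
    simpa only [I, hνμ (φ n) (hφholo n) (hφint n)] using
      norm_integral_mul_div_integral_norm_le hνc (hφint n) hn
  calc k ≤ ‖(k : ℂ)‖ := by simpa using le_abs_self k
    _ ≤ c := le_of_tendsto hIk.norm hIc

/-- if `μ ∈ L^∞(Δ)` with `‖μ‖_∞ = k > 0` admits a sequence `φₙ ∈ A(Δ)` with
`k‖φₙ‖ - Re ∫∫ μφₙ → 0` and `|φₙ| → ∞` a.e. on `Δ \ A` for some compact `A ⊂ Δ`, then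
`φₙ/‖φₙ‖` is a Hamilton sequence for `μ` and `μ` is infinitesimally extremal. -/
theorem hamilton_sequence_and_extremality
    (μ : ℂ → ℂ) (k : ℝ) (hk : 0 < k)
    (hμm : Measurable μ)
    -- `‖μ‖_∞ = k`: a.e. bounded by `k` on `Δ` ...
    (hμk : ∀ᵐ z ∂(volume.restrict (ball (0 : ℂ) 1)), ‖μ z‖ ≤ k)
    -- ... and no smaller essential bound:
    (hμk' : ∀ c : ℝ, (∀ᵐ z ∂(volume.restrict (ball (0 : ℂ) 1)), ‖μ z‖ ≤ c) → k ≤ c)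
    (A : Set ℂ) (hA : IsCompact A) (hAΔ : A ⊆ ball (0 : ℂ) 1)
    (φ : ℕ → ℂ → ℂ)
    (hφholo : ∀ n, DifferentiableOn ℂ (φ n) (ball (0 : ℂ) 1))
    (hφint : ∀ n, IntegrableOn (φ n) (ball (0 : ℂ) 1))
    -- `k‖φₙ‖ - Re ∫∫_Δ μ φₙ → 0`:
    (hdelta : Tendsto (fun n =>
        k * (∫ z in ball (0 : ℂ) 1, ‖φ n z‖) -
          (∫ z in ball (0 : ℂ) 1, μ z * φ n z).re) atTop (nhds 0))
    -- `|φₙ(z)| → ∞` for a.e. `z ∈ Δ \ A`: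
    (hblow : ∀ᵐ z ∂(volume.restrict (ball (0 : ℂ) 1 \ A)),
        Tendsto (fun n => ‖φ n z‖) atTop atTop) :
    -- `φₙ/‖φₙ‖` is a Hamilton sequence for `μ`:
    Tendsto (fun n => ∫ z in ball (0 : ℂ) 1,
        μ z * (φ n z / ((∫ w in ball (0 : ℂ) 1, ‖φ n w‖ : ℝ) : ℂ)))
      atTop (nhds (k : ℂ)) ∧
    -- `μ` is infinitesimally extremal: every `ν` infinitesimally equivalent to `μ`
    -- has essential sup norm at least `k`:
    (∀ ν : ℂ → ℂ, Measurable ν →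
      (∀ φ' : ℂ → ℂ, DifferentiableOn ℂ φ' (ball (0 : ℂ) 1) →
        IntegrableOn φ' (ball (0 : ℂ) 1) →
        ∫ z in ball (0 : ℂ) 1, ν z * φ' z = ∫ z in ball (0 : ℂ) 1, μ z * φ' z) →
      ∀ c : ℝ, (∀ᵐ z ∂(volume.restrict (ball (0 : ℂ) 1)), ‖ν z‖ ≤ c) → k ≤ c) :=
  hamilton_sequence_and_extremality_general μ k hμk A hA hAΔ φ hφholo hφint hdelta hblow
end

section
/- Suppose μ, ν ∈ L^∞(Δ) are infinitesimally equivalent with ‖ν‖_∞ ≤ ‖μ‖_∞, and suppose the Infinitesimal Delta Inequality holds: ∫∫_Δ |μ−ν|² |φ| ≤ C‖μ‖_∞(‖μ‖_∞‖φ‖ − Re ∫∫_Δ μφ) for all φ ∈ A(Δ). If there is a sequence φₙ ∈ A(Δ) with ‖μ‖_∞‖φₙ‖ − Re ∫∫_Δ μφₙ → 0 and liminf |φₙ(z)| > 0 for almost every z in a measurable set E ⊂ Δ, then μ = ν almost everywhere on E. -/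
open Set MeasureTheory Metric Filter
open scoped ENNReal Topology

/-! Fatou's lemma applied to `‖μ - ν‖ₑ ^ 2 * ‖φₙ‖ₑ` on `E`: the Infinitesimal Delta Inequality
bounds its integrals by `C k (k ‖φₙ‖ - Re ∫∫ μ φₙ) → 0`, so its pointwise `liminf`, which is at
least `‖μ - ν‖ₑ ^ 2 * liminf ‖φₙ‖ₑ`, vanishes a.e. on `E`; as `liminf ‖φₙ‖ > 0` there, `μ = ν`. -/

theorem AEMeasurable.liminf_atTop {α β : Type*} [MeasurableSpace α] {m : Measure α}
    [TopologicalSpace β] [CompleteLinearOrder β] [OrderTopology β] [MeasurableSpace β]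
    [BorelSpace β] [SecondCountableTopology β] {f : ℕ → α → β}
    (hf : ∀ n, AEMeasurable (f n) m) :
    AEMeasurable (fun x => liminf (fun n => f n x) atTop) m := by
  simp_rw [liminf_eq_iSup_iInf_of_nat']
  exact .iSup fun n => .iInf fun i => hf (i + n)

theorem liminf_enorm_ne_zero_of_liminf_norm_pos {E : Type*} [NormedAddCommGroup E] {u : ℕ → E}
    (h : 0 < liminf (fun n => ‖u n‖) atTop) : liminf (fun n => ‖u n‖ₑ) atTop ≠ 0 := by
  have hbdd : IsBoundedUnder (· ≥ ·) atTop (fun n => ‖u n‖) :=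
    isBoundedUnder_of ⟨0, fun n => norm_nonneg _⟩
  have hev : ∀ᶠ n in atTop, liminf (fun n => ‖u n‖) atTop / 2 < ‖u n‖ :=
    eventually_lt_of_lt_liminf (half_lt_self h) hbdd
  refine ne_bot_of_le_ne_bot (ENNReal.ofReal_pos.2 (half_pos h)).ne' (le_liminf_of_le ?_ ?_)
  · isBoundedDefault
  · filter_upwards [hev] with n hn
    rw [← ofReal_norm]
    exact ENNReal.ofReal_le_ofReal hn.le

theorem ae_eq_zero_of_tendsto_lintegral_mul {α : Type*} [MeasurableSpace α] {m : Measure α}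
    {g : α → ℝ≥0∞} {f : ℕ → α → ℝ≥0∞} (hg : AEMeasurable g m) (hf : ∀ n, AEMeasurable (f n) m)
    (hlim : Tendsto (fun n => ∫⁻ x, g x * f n x ∂m) atTop (𝓝 0))
    (hpos : ∀ᵐ x ∂m, liminf (fun n => f n x) atTop ≠ 0) :
    g =ᵐ[m] 0 := by
  have hfatou : ∫⁻ x, g x * liminf (fun n => f n x) atTop ∂m = 0 := by
    refine le_antisymm ?_ zero_le
    calc ∫⁻ x, g x * liminf (fun n => f n x) atTop ∂m
        ≤ ∫⁻ x, liminf (fun n => g x * f n x) atTop ∂m := lintegral_mono fun x => by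
          simpa only [liminf_const, Pi.mul_def] using
            ENNReal.le_liminf_mul (u := fun _ => g x) (v := fun n => f n x) (f := atTop)
      _ ≤ liminf (fun n => ∫⁻ x, g x * f n x ∂m) atTop :=
          lintegral_liminf_le' fun n => hg.mul (hf n)
      _ = 0 := hlim.liminf_eq
  filter_upwards [(lintegral_eq_zero_iff' (hg.mul (.liminf_atTop hf))).1 hfatou, hpos]
    with x hx hxpos
  exact (mul_eq_zero.1 hx).resolve_right hxpos

theorem delta_inequality_forces_agreement_general
    (μ ν : ℂ → ℂ) (k : ℝ) (C : ℝ)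
    (hμm : Measurable μ) (hνm : Measurable ν)
    -- `‖μ‖_∞ = k` and `‖ν‖_∞ ≤ ‖μ‖_∞`:
    (hμk : ∀ᵐ z ∂(volume.restrict (ball (0 : ℂ) 1)), ‖μ z‖ ≤ k)
    (hνk : ∀ᵐ z ∂(volume.restrict (ball (0 : ℂ) 1)), ‖ν z‖ ≤ k)
    -- the Infinitesimal Delta Inequality:
    (hdeltaIneq : ∀ φ' : ℂ → ℂ, DifferentiableOn ℂ φ' (ball (0 : ℂ) 1) →
      IntegrableOn φ' (ball (0 : ℂ) 1) →
      (∫ z in ball (0 : ℂ) 1, ‖μ z - ν z‖ ^ 2 * ‖φ' z‖) ≤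
        C * k * (k * (∫ z in ball (0 : ℂ) 1, ‖φ' z‖) -
          (∫ z in ball (0 : ℂ) 1, μ z * φ' z).re))
    (φ : ℕ → ℂ → ℂ)
    (hφholo : ∀ n, DifferentiableOn ℂ (φ n) (ball (0 : ℂ) 1))
    (hφint : ∀ n, IntegrableOn (φ n) (ball (0 : ℂ) 1))
    (hdelta : Tendsto (fun n =>
        k * (∫ z in ball (0 : ℂ) 1, ‖φ n z‖) -
          (∫ z in ball (0 : ℂ) 1, μ z * φ n z).re) atTop (nhds 0))
    (E : Set ℂ) (hEΔ : E ⊆ ball (0 : ℂ) 1)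
    (hliminf : ∀ᵐ z ∂(volume.restrict E),
        0 < Filter.liminf (fun n => ‖φ n z‖) atTop) :
    ∀ᵐ z ∂(volume.restrict E), μ z = ν z := by
  set B := ball (0 : ℂ) 1
  have hμν : ∀ᵐ z ∂(volume.restrict B), ‖(μ z - ν z) ^ 2‖ ≤ (2 * k) ^ 2 := by
    filter_upwards [hμk, hνk] with z hμz hνz
    rw [norm_pow]
    exact pow_le_pow_left₀ (norm_nonneg _) ((norm_sub_le _ _).trans (by linarith)) 2
  have hbound : ∀ n, ∫⁻ z in E, ‖μ z - ν z‖ₑ ^ 2 * ‖φ n z‖ₑ ≤ ENNReal.ofReal (C * k *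
      (k * (∫ z in B, ‖φ n z‖) - (∫ z in B, μ z * φ n z).re)) := fun n => by
    have hint : Integrable (fun z => (μ z - ν z) ^ 2 * φ n z) (volume.restrict B) :=
      (hφint n).bdd_mul ((hμm.sub hνm).pow_const 2).aestronglyMeasurable hμν
    calc ∫⁻ z in E, ‖μ z - ν z‖ₑ ^ 2 * ‖φ n z‖ₑ
        ≤ ∫⁻ z in B, ‖(μ z - ν z) ^ 2 * φ n z‖ₑ := by
          simpa only [enorm_mul, enorm_pow] using lintegral_mono_set hEΔ
      _ = ENNReal.ofReal (∫ z in B, ‖(μ z - ν z) ^ 2 * φ n z‖) :=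
          (ofReal_integral_norm_eq_lintegral_enorm hint).symm
      _ ≤ _ := ENNReal.ofReal_le_ofReal <| by
          simpa only [norm_mul, norm_pow] using hdeltaIneq _ (hφholo n) (hφint n)
  have hlim : Tendsto (fun n => ∫⁻ z in E, ‖μ z - ν z‖ₑ ^ 2 * ‖φ n z‖ₑ) atTop (𝓝 0) := by
    have hrhs := ENNReal.tendsto_ofReal (by simpa only [mul_zero] using hdelta.const_mul (C * k))
    rw [ENNReal.ofReal_zero] at hrhs
    exact tendsto_of_tendsto_of_tendsto_of_le_of_le tendsto_const_nhds hrhs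
      (fun _ => zero_le) hbound
  have hzero := ae_eq_zero_of_tendsto_lintegral_mul
    ((hμm.sub hνm).enorm.pow_const 2).aemeasurable
    (fun n => ((hφint n).mono_set hEΔ).aemeasurable.enorm) hlim
    (hliminf.mono fun z => liminf_enorm_ne_zero_of_liminf_norm_pos)
  filter_upwards [hzero] with z hz
  simpa [sub_eq_zero] using hz

/-- under the Infinitesimal Delta Inequality, if `μ, ν ∈ L^∞(Δ)` are
infinitesimally equivalent with `‖ν‖_∞ ≤ ‖μ‖_∞` and there is a sequence `φₙ ∈ A(Δ)`
with `‖μ‖_∞‖φₙ‖ - Re ∫∫ μφₙ → 0` and `liminf |φₙ(z)| > 0` a.e. on a measurable set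
`E ⊂ Δ`, then `μ = ν` a.e. on `E`. -/
theorem delta_inequality_forces_agreement
    (μ ν : ℂ → ℂ) (k : ℝ) (C : ℝ) (hC : 0 < C)
    (hμm : Measurable μ) (hνm : Measurable ν)
    -- `‖μ‖_∞ = k` and `‖ν‖_∞ ≤ ‖μ‖_∞`:
    (hμk : ∀ᵐ z ∂(volume.restrict (ball (0 : ℂ) 1)), ‖μ z‖ ≤ k)
    (hνk : ∀ᵐ z ∂(volume.restrict (ball (0 : ℂ) 1)), ‖ν z‖ ≤ k)
    -- infinitesimal equivalence:
    (hequiv : ∀ φ' : ℂ → ℂ, DifferentiableOn ℂ φ' (ball (0 : ℂ) 1) →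
      IntegrableOn φ' (ball (0 : ℂ) 1) →
      ∫ z in ball (0 : ℂ) 1, μ z * φ' z = ∫ z in ball (0 : ℂ) 1, ν z * φ' z)
    -- the Infinitesimal Delta Inequality:
    (hdeltaIneq : ∀ φ' : ℂ → ℂ, DifferentiableOn ℂ φ' (ball (0 : ℂ) 1) →
      IntegrableOn φ' (ball (0 : ℂ) 1) →
      (∫ z in ball (0 : ℂ) 1, ‖μ z - ν z‖ ^ 2 * ‖φ' z‖) ≤
        C * k * (k * (∫ z in ball (0 : ℂ) 1, ‖φ' z‖) -
          (∫ z in ball (0 : ℂ) 1, μ z * φ' z).re))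
    (φ : ℕ → ℂ → ℂ)
    (hφholo : ∀ n, DifferentiableOn ℂ (φ n) (ball (0 : ℂ) 1))
    (hφint : ∀ n, IntegrableOn (φ n) (ball (0 : ℂ) 1))
    (hdelta : Tendsto (fun n =>
        k * (∫ z in ball (0 : ℂ) 1, ‖φ n z‖) -
          (∫ z in ball (0 : ℂ) 1, μ z * φ n z).re) atTop (nhds 0))
    (E : Set ℂ) (hE : MeasurableSet E) (hEΔ : E ⊆ ball (0 : ℂ) 1)
    (hliminf : ∀ᵐ z ∂(volume.restrict E),
        0 < Filter.liminf (fun n => ‖φ n z‖) atTop) :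
    ∀ᵐ z ∂(volume.restrict E), μ z = ν z :=
  delta_inequality_forces_agreement_general μ ν k C hμm hνm hμk hνk hdeltaIneq φ hφholo hφint hdelta
    E hEΔ hliminf
end

section
/- Suppose μ ∈ L^∞(Δ) with ‖μ‖_∞ = k ∈ (0,1) admits a Hamilton sequence φₙ (‖φₙ‖=1, ∫∫ μφₙ → k), and suppose ν ∈ L^∞(Δ) is infinitesimally equivalent to μ with ‖ν‖_∞ ≤ k and ν ≠ μ on a set of positive measure. Then both μ and ν are infinitesimally extremal in their common class, and the class contains more than one extremal element; hence the class contains infinitely many extremal elements, since for every t ∈ [0,1] the convex combination tμ + (1−t)ν is also extremal in the class. -/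
open Set MeasureTheory Metric Filter

/-- Infinitesimal equivalence on the unit disk: `μ` and `ν` pair identically against
every integrable holomorphic function on `Δ`. -/
def InfEquiv (μ ν : ℂ → ℂ) : Prop :=
  ∀ φ : ℂ → ℂ, DifferentiableOn ℂ φ (Metric.ball (0 : ℂ) 1) →
    IntegrableOn φ (Metric.ball (0 : ℂ) 1) →
    ∫ z in Metric.ball (0 : ℂ) 1, μ z * φ z = ∫ z in Metric.ball (0 : ℂ) 1, ν z * φ z

/-- `η` is extremal with norm `k` in its infinitesimal class: `‖η‖_∞ ≤ k` and every
member of its class has essential sup norm at least `k`. -/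
def IsExtremalAt (k : ℝ) (η : ℂ → ℂ) : Prop :=
  (∀ᵐ z ∂(volume.restrict (Metric.ball (0 : ℂ) 1)), ‖η z‖ ≤ k) ∧
  ∀ χ : ℂ → ℂ, InfEquiv η χ →
    ∀ c : ℝ, (∀ᵐ z ∂(volume.restrict (Metric.ball (0 : ℂ) 1)), ‖χ z‖ ≤ c) → k ≤ c

/-- Key lemma: if `χ` pairs against the Hamilton sequence of `μ` the same way `μ`
does, then any a.e. bound `c` for `χ` satisfies `k ≤ c`. -/
lemma key_lemma (μ : ℂ → ℂ) (k : ℝ) (hk0 : 0 < k)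
    (φ : ℕ → ℂ → ℂ)
    (hφint : ∀ n, IntegrableOn (φ n) (Metric.ball (0 : ℂ) 1))
    (hφnorm : ∀ n, (∫ z in Metric.ball (0 : ℂ) 1, ‖φ n z‖) = 1)
    (hHam : Tendsto (fun n => ∫ z in Metric.ball (0 : ℂ) 1, μ z * φ n z)
        atTop (nhds (k : ℂ)))
    (χ : ℂ → ℂ)
    (heq : ∀ n, (∫ z in Metric.ball (0 : ℂ) 1, χ z * φ n z)
      = ∫ z in Metric.ball (0 : ℂ) 1, μ z * φ n z)
    (c : ℝ) (hc : ∀ᵐ z ∂(volume.restrict (Metric.ball (0 : ℂ) 1)), ‖χ z‖ ≤ c) :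
    k ≤ c := by
  have hb : ∀ n, ‖∫ z in Metric.ball (0 : ℂ) 1, χ z * φ n z‖ ≤ c := by
    intro n
    calc ‖∫ z in Metric.ball (0 : ℂ) 1, χ z * φ n z‖
        ≤ ∫ z in Metric.ball (0 : ℂ) 1, ‖χ z * φ n z‖ :=
          norm_integral_le_integral_norm _
      _ ≤ ∫ z in Metric.ball (0 : ℂ) 1, c * ‖φ n z‖ := by
          apply integral_mono_of_nonneg
          · filter_upwards with z using norm_nonneg _
          · exact ((hφint n).norm.const_mul c)
          · filter_upwards [hc] with z hz
            rw [norm_mul]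
            exact mul_le_mul_of_nonneg_right hz (norm_nonneg _)
      _ = c := by rw [integral_const_mul, hφnorm n, mul_one]
  have hlim : Tendsto (fun n => ‖∫ z in Metric.ball (0 : ℂ) 1, χ z * φ n z‖)
      atTop (nhds ‖(k : ℂ)‖) := by
    simp only [heq]; exact hHam.norm
  have hle : ‖(k : ℂ)‖ ≤ c := le_of_tendsto hlim (Eventually.of_forall hb)
  simpa [Complex.norm_real, abs_of_pos hk0] using hle

/-- if `μ` with `‖μ‖_∞ = k ∈ (0,1)` has a Hamilton sequence and `ν` is an
infinitesimally equivalent coefficient with `‖ν‖_∞ ≤ k` differing from `μ` on a set of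
positive measure, then `μ` and `ν` are both extremal in the common class, every convex
combination `tμ + (1-t)ν` is extremal, and these combinations are pairwise distinct on
sets of positive measure — so the class contains infinitely many extremal elements. -/
theorem class_with_two_extremals_has_infinitely_many
    (μ ν : ℂ → ℂ) (k : ℝ) (hk0 : 0 < k) (hk1 : k < 1)
    (hμm : Measurable μ) (hνm : Measurable ν)
    (hμk : ∀ᵐ z ∂(volume.restrict (Metric.ball (0 : ℂ) 1)), ‖μ z‖ ≤ k)
    (hνk : ∀ᵐ z ∂(volume.restrict (Metric.ball (0 : ℂ) 1)), ‖ν z‖ ≤ k)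
    -- a Hamilton sequence for `μ`: unit-norm `φₙ ∈ A(Δ)` with `∫∫ μφₙ → k`:
    (φ : ℕ → ℂ → ℂ)
    (hφholo : ∀ n, DifferentiableOn ℂ (φ n) (Metric.ball (0 : ℂ) 1))
    (hφint : ∀ n, IntegrableOn (φ n) (Metric.ball (0 : ℂ) 1))
    (hφnorm : ∀ n, (∫ z in Metric.ball (0 : ℂ) 1, ‖φ n z‖) = 1)
    (hHam : Tendsto (fun n => ∫ z in Metric.ball (0 : ℂ) 1, μ z * φ n z)
        atTop (nhds (k : ℂ)))
    -- `ν` is infinitesimally equivalent to `μ` and differs from it on a set of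
    -- positive measure:
    (hequiv : InfEquiv μ ν)
    (hdiff : 0 < volume {z ∈ Metric.ball (0 : ℂ) 1 | μ z ≠ ν z}) :
    IsExtremalAt k μ ∧ IsExtremalAt k ν ∧
    (∀ t : ℝ, t ∈ Set.Icc (0 : ℝ) 1 →
      IsExtremalAt k (fun z => (t : ℂ) * μ z + (1 - t : ℂ) * ν z)) ∧
    (∀ t s : ℝ, t ∈ Set.Icc (0 : ℝ) 1 → s ∈ Set.Icc (0 : ℝ) 1 → t ≠ s →
      0 < volume {z ∈ Metric.ball (0 : ℂ) 1 |
        (t : ℂ) * μ z + (1 - t : ℂ) * ν z ≠ (s : ℂ) * μ z + (1 - s : ℂ) * ν z}) := by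
  -- integrability of `μ * φ n` and `ν * φ n`
  have hμφint : ∀ n, IntegrableOn (fun z => μ z * φ n z) (Metric.ball (0 : ℂ) 1) := by
    intro n
    refine Integrable.mono' (((hφint n).norm.const_mul k))
      ((hμm.aemeasurable.aestronglyMeasurable).mul
        (hφint n).aestronglyMeasurable) ?_
    filter_upwards [hμk] with z hz
    rw [norm_mul]
    exact mul_le_mul_of_nonneg_right hz (norm_nonneg _)
  have hνφint : ∀ n, IntegrableOn (fun z => ν z * φ n z) (Metric.ball (0 : ℂ) 1) := by
    intro n
    refine Integrable.mono' (((hφint n).norm.const_mul k))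
      ((hνm.aemeasurable.aestronglyMeasurable).mul
        (hφint n).aestronglyMeasurable) ?_
    filter_upwards [hνk] with z hz
    rw [norm_mul]
    exact mul_le_mul_of_nonneg_right hz (norm_nonneg _)
  have hμν : ∀ n, (∫ z in Metric.ball (0 : ℂ) 1, ν z * φ n z)
      = ∫ z in Metric.ball (0 : ℂ) 1, μ z * φ n z :=
    fun n => (hequiv (φ n) (hφholo n) (hφint n)).symm
  have hExtμ : IsExtremalAt k μ := by
    refine ⟨hμk, fun χ hχ c hc => ?_⟩
    exact key_lemma μ k hk0 φ hφint hφnorm hHam χ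
      (fun n => (hχ (φ n) (hφholo n) (hφint n)).symm) c hc
  have hExtν : IsExtremalAt k ν := by
    refine ⟨hνk, fun χ hχ c hc => ?_⟩
    refine key_lemma μ k hk0 φ hφint hφnorm hHam χ (fun n => ?_) c hc
    rw [← hχ (φ n) (hφholo n) (hφint n), hμν n]
  refine ⟨hExtμ, hExtν, ?_, ?_⟩
  · intro t ht
    obtain ⟨ht0, ht1⟩ := ht
    constructor
    · filter_upwards [hμk, hνk] with z h1 h2
      calc ‖(t : ℂ) * μ z + (1 - t : ℂ) * ν z‖
          ≤ ‖(t : ℂ) * μ z‖ + ‖(1 - t : ℂ) * ν z‖ := norm_add_le _ _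
        _ ≤ t * k + (1 - t) * k := by
            rw [norm_mul, norm_mul]
            have e1 : ‖(t : ℂ)‖ = t := by
              rw [Complex.norm_real, Real.norm_of_nonneg ht0]
            have e2 : ‖(1 - t : ℂ)‖ = 1 - t := by
              have h12 : ((1 - t : ℝ) : ℂ) = (1 - t : ℂ) := by push_cast; ring
              rw [← h12, Complex.norm_real, Real.norm_of_nonneg (by linarith)]
            rw [e1, e2]
            exact add_le_add (mul_le_mul_of_nonneg_left h1 ht0)
              (mul_le_mul_of_nonneg_left h2 (by linarith))
        _ = k := by ring
    · intro χ hχ c hc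
      refine key_lemma μ k hk0 φ hφint hφnorm hHam χ (fun n => ?_) c hc
      have hsplit : (∫ z in Metric.ball (0 : ℂ) 1,
          ((t : ℂ) * μ z + (1 - t : ℂ) * ν z) * φ n z)
          = ∫ z in Metric.ball (0 : ℂ) 1, μ z * φ n z := by
        have : (fun z => ((t : ℂ) * μ z + (1 - t : ℂ) * ν z) * φ n z)
            = fun z => (t : ℂ) * (μ z * φ n z) + (1 - t : ℂ) * (ν z * φ n z) := by
          funext z; ring
        rw [this, integral_add ((hμφint n).const_mul _) ((hνφint n).const_mul _),
          integral_const_mul, integral_const_mul, hμν n]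
        ring
      rw [← hχ (φ n) (hφholo n) (hφint n), hsplit]
  · intro t s ht hs hts
    have hset : {z ∈ Metric.ball (0 : ℂ) 1 |
        (t : ℂ) * μ z + (1 - t : ℂ) * ν z ≠ (s : ℂ) * μ z + (1 - s : ℂ) * ν z}
        = {z ∈ Metric.ball (0 : ℂ) 1 | μ z ≠ ν z} := by
      ext z
      simp only [Set.mem_setOf_eq, Set.mem_sep_iff]
      refine and_congr_right fun _ => not_congr ?_
      constructor
      · intro h
        have h2 : ((t : ℂ) - s) * (μ z - ν z) = 0 := by
          have : (t : ℂ) * μ z + (1 - t : ℂ) * ν z - ((s : ℂ) * μ z + (1 - s : ℂ) * ν z)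
              = ((t : ℂ) - s) * (μ z - ν z) := by ring
          rw [← this, h, sub_self]
        rcases mul_eq_zero.mp h2 with h3 | h3
        · exfalso
          apply hts
          have h4 : (t : ℂ) = s := sub_eq_zero.mp h3
          exact_mod_cast h4
        · exact sub_eq_zero.mp h3
      · intro h; rw [h]; ring
    rw [hset]
    exact hdiff
end
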